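/- Consider f and h as in (P₁), let v ∈ ℝ, and suppose there exists (x̄,ū,w̄) with h(x̄,ū,w̄) < 0. Then the following are equivalent: (S₁) for every (x,u,w), h(x,u,w) ≤ 0 implies f(x,u,w) + v ≥ 0; (S₂) for every x, y ∈ ℝ^l and z ∈ ℝ^k satisfying Σᵢ(αᵢyᵢ + bᵢxᵢ) + Σⱼ zⱼ + c ≤ 0 and ½xᵢ² ≤ yᵢ for all i, one has Σᵢ(δᵢyᵢ + eᵢxᵢ) + Σⱼ ζⱼzⱼ + c₀ + v ≥ 0. -/
import Mathlib

open scoped Classical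

/-- For a positive leading coefficient, the quadratic eventually dominates: explicit large `t`. -/
private lemma aux_tlarge (a b c : ℝ) (ha : 0 < a) : ∃ t : ℝ, 0 ≤ t ∧ b * t + c ≤ a * t ^ 2 := by
  refine ⟨(|b| + |c| + 1) / a + 1, by positivity, ?_⟩
  set T := (|b| + |c| + 1) / a + 1 with hTdef
  have hT1 : 1 ≤ T := by
    have h0 : 0 ≤ (|b| + |c| + 1) / a := by positivity
    simp only [hTdef]; linarith
  have haT : a * T = |b| + |c| + 1 + a := by
    simp only [hTdef]; field_simp
  have key : a * T ^ 2 = (|b| + |c| + 1 + a) * T := by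
    rw [sq, ← mul_assoc, haT]
  have hb : b * T ≤ |b| * T := mul_le_mul_of_nonneg_right (le_abs_self b) (by linarith)
  have hc' : c ≤ |c| * T := le_trans (le_abs_self c) (le_mul_of_one_le_right (abs_nonneg c) hT1)
  nlinarith [abs_nonneg b, abs_nonneg c]

/-- Per-coordinate reduction: a slacked point `(x, y)` with `½x² ≤ y` can be replaced by a
point `x'` on the parabola with the same constraint contribution and no larger objective. -/
private lemma coord_reduce (a b d e x y : ℝ) (hy : (1/2) * x ^ 2 ≤ y)
    (hsign : a ≠ 0 ∨ 0 ≤ d) :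
    ∃ x' : ℝ, (1/2) * a * x' ^ 2 + b * x' = a * y + b * x ∧
      (1/2) * d * x' ^ 2 + e * x' ≤ d * y + e * x := by
  by_cases ha : a = 0
  · have hd : 0 ≤ d := hsign.resolve_left (by simp [ha])
    refine ⟨x, by rw [ha]; ring, ?_⟩
    nlinarith [mul_le_mul_of_nonneg_left hy hd]
  · set σ : ℝ := if 0 ≤ e * a - d * b then -1 else 1 with hσdef
    have hσ2 : σ ^ 2 = 1 := by
      simp only [hσdef]; split_ifs <;> norm_num
    have hσneg : σ * (e * a - d * b) ≤ 0 := by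
      simp only [hσdef]; split_ifs with h
      · nlinarith
      · nlinarith [lt_of_not_ge h]
    obtain ⟨T, hT0, hTge⟩ := aux_tlarge (a ^ 2 / 2) (-(x * σ * a + σ * b))
      (-((1/2) * x ^ 2 - y)) (by positivity)
    set g : ℝ → ℝ := fun t => (a ^ 2 / 2) * t ^ 2 + (x * σ * a + σ * b) * t + ((1/2) * x ^ 2 - y)
      with hgdef
    have hg0 : g 0 ≤ 0 := by simp only [hgdef]; norm_num; linarith
    have hgT : 0 ≤ g T := by simp only [hgdef]; nlinarith [hTge]
    have hcont : ContinuousOn g (Set.Icc 0 T) := by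
      apply Continuous.continuousOn; simp only [hgdef]; continuity
    obtain ⟨t, ht, hgt⟩ := intermediate_value_Icc hT0 hcont ⟨hg0, hgT⟩
    have hgt' : (a ^ 2 / 2) * t ^ 2 + (x * σ * a + σ * b) * t + ((1/2) * x ^ 2 - y) = 0 := hgt
    refine ⟨x + t * σ * a, ?_, ?_⟩
    · have hsq : (1/2) * (x + t * σ * a) ^ 2 = y - t * σ * b := by
        linear_combination hgt' + (a ^ 2 * t ^ 2 / 2) * hσ2
      linear_combination a * hsq
    · have hsq : (1/2) * (x + t * σ * a) ^ 2 = y - t * σ * b := by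
        linear_combination hgt' + (a ^ 2 * t ^ 2 / 2) * hσ2
      have hdX : (1/2) * d * (x + t * σ * a) ^ 2 = d * (y - t * σ * b) := by
        linear_combination d * hsq
      nlinarith [mul_nonneg ht.1 (neg_nonneg.mpr hσneg)]

/-- Summation over an update at one coordinate, specialised to the quadratic-plus-linear form. -/
private lemma sum_update' (n : ℕ) (i : Fin n) (X : Fin n → ℝ) (v : ℝ) (p q : Fin n → ℝ) :
    ∑ j, ((1/2) * p j * (Function.update X i v j) ^ 2 + q j * (Function.update X i v j))
      = (∑ j, ((1/2) * p j * (X j) ^ 2 + q j * X j))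
        + ((1/2) * p i * v ^ 2 + q i * v) - ((1/2) * p i * (X i) ^ 2 + q i * (X i)) := by
  rw [← Finset.add_sum_erase Finset.univ
      (fun j => (1/2) * p j * (Function.update X i v j) ^ 2 + q j * (Function.update X i v j))
      (Finset.mem_univ i),
    ← Finset.add_sum_erase Finset.univ
      (fun j => (1/2) * p j * (X j) ^ 2 + q j * X j) (Finset.mem_univ i)]
  have herase : ∑ j ∈ Finset.univ.erase i,
      ((1/2) * p j * (Function.update X i v j) ^ 2 + q j * (Function.update X i v j))
      = ∑ j ∈ Finset.univ.erase i, ((1/2) * p j * (X j) ^ 2 + q j * X j) :=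
    Finset.sum_congr rfl (fun j hj => by
      rw [Function.update_of_ne (Finset.ne_of_mem_erase hj)])
  rw [herase]
  simp only [Function.update_self]
  ring

private lemma small_t (A m : ℝ) (hm : 0 ≤ m)
    (h : ∀ t : ℝ, t ≠ 0 → 0 ≤ A + m * ((1/2) * t ^ 2)) : 0 ≤ A := by
  by_contra hA
  push_neg at hA
  have h1 : 0 < -A / (m + 1) := div_pos (by linarith) (by linarith)
  set t := Real.sqrt (-A / (m + 1)) with htdef
  have ht2 : t ^ 2 = -A / (m + 1) := Real.sq_sqrt (le_of_lt h1)
  have htne : t ≠ 0 := ne_of_gt (Real.sqrt_pos.mpr h1)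
  have hh := h t htne
  rw [ht2] at hh
  have h2 : 0 ≤ (A + m * ((1/2) * (-A / (m + 1)))) * (2 * (m + 1)) :=
    mul_nonneg hh (by linarith)
  have h3 : (A + m * ((1/2) * (-A / (m + 1)))) * (2 * (m + 1)) = A * (m + 2) := by
    field_simp; ring
  nlinarith [mul_neg_of_neg_of_pos hA (show (0:ℝ) < m + 2 by linarith)]

/-- The objective `f(x,u,w) = Σᵢ(½δᵢxᵢ² + eᵢxᵢ) + Σⱼ(ζⱼuⱼwⱼ + ½wⱼ² + ηⱼwⱼ)` of problem (P₁). -/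
noncomputable def quadObj {l k : ℕ} (δ e : Fin l → ℝ) (ζ η : Fin k → ℝ)
    (x : Fin l → ℝ) (u w : Fin k → ℝ) : ℝ :=
  (∑ i, ((1/2) * δ i * x i ^ 2 + e i * x i)) +
    ∑ j, (ζ j * u j * w j + (1/2) * w j ^ 2 + η j * w j)

/-- The constraint function `h(x,u,w) = Σᵢ(½αᵢxᵢ² + bᵢxᵢ) + Σⱼ uⱼwⱼ + c` of problem (P₁). -/
noncomputable def quadCon {l k : ℕ} (α b : Fin l → ℝ) (c : ℝ)
    (x : Fin l → ℝ) (u w : Fin k → ℝ) : ℝ :=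
  (∑ i, ((1/2) * α i * x i ^ 2 + b i * x i)) + (∑ j, u j * w j) + c

/-- The SOCP objective `Σᵢ(δᵢyᵢ + eᵢxᵢ) + Σⱼ ζⱼzⱼ + c₀` of problem (P₂). -/
noncomputable def socpObj {l k : ℕ} (δ e : Fin l → ℝ) (ζ : Fin k → ℝ) (c₀ : ℝ)
    (x y : Fin l → ℝ) (z : Fin k → ℝ) : ℝ :=
  (∑ i, (δ i * y i + e i * x i)) + (∑ j, ζ j * z j) + c₀

/-- The linear part `Σᵢ(αᵢyᵢ + bᵢxᵢ) + Σⱼ zⱼ` of the SOCP constraint in (P₂). -/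
noncomputable def socpConLhs {l k : ℕ} (α b : Fin l → ℝ)
    (x y : Fin l → ℝ) (z : Fin k → ℝ) : ℝ :=
  (∑ i, (α i * y i + b i * x i)) + ∑ j, z j

/-- The simplified S-lemma of Jiang–Li–Wu (Section 2.4): under the Slater condition, the
implication `h(x,u,w) ≤ 0 ⟹ f(x,u,w) + v ≥ 0` holds if and only if the SOCP system of the
reformulation certifies nonnegativity. -/
theorem stmt_12 (l k : ℕ) (δ e α b : Fin l → ℝ) (ζ η : Fin k → ℝ) (c c₀ v : ℝ)
    (hc₀ : c₀ = -(1/2) * ∑ j, η j ^ 2)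
    (hslater : ∃ (x : Fin l → ℝ) (u w : Fin k → ℝ), quadCon α b c x u w < 0) :
    ((∀ (x : Fin l → ℝ) (u w : Fin k → ℝ),
        quadCon α b c x u w ≤ 0 → 0 ≤ quadObj δ e ζ η x u w + v) ↔
      (∀ (x y : Fin l → ℝ) (z : Fin k → ℝ),
        socpConLhs α b x y z + c ≤ 0 → (∀ i, (1/2) * x i ^ 2 ≤ y i) →
        0 ≤ socpObj δ e ζ c₀ x y z + v)) := by
  constructor
  · -- hard direction
    intro hS1 x y z hzcon hy
    -- Step 1: rule out `α i = 0 ∧ δ i < 0` using Slater + unboundedness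
    have hsign : ∀ i, α i ≠ 0 ∨ 0 ≤ δ i := by
      intro i
      by_contra hcon'
      push_neg at hcon'
      obtain ⟨hα0, hδ⟩ := hcon'
      obtain ⟨X, U, W, hX⟩ := hslater
      set s : ℝ := if b i = 0 then 1 else -(b i) with hsdef
      have hs0 : s ≠ 0 := by
        simp only [hsdef]; split_ifs with h
        · norm_num
        · exact neg_ne_zero.mpr h
      have hbs : b i * s ≤ 0 := by
        simp only [hsdef]; split_ifs with h
        · simp [h]
        · nlinarith [sq_nonneg (b i)]
      have hs2 : 0 < s ^ 2 := lt_of_le_of_ne (sq_nonneg s) (Ne.symm (pow_ne_zero 2 hs0))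
      obtain ⟨t, ht0, htge⟩ := aux_tlarge (-((1/2) * δ i) * s ^ 2)
        ((δ i * X i + e i) * s) (quadObj δ e ζ η X U W + v + 1) (by nlinarith)
      set X' := Function.update X i (X i + t * s) with hX'def
      have hcon2 : quadCon α b c X' U W ≤ 0 := by
        have e1 : quadCon α b c X' U W = quadCon α b c X U W + b i * (t * s) := by
          unfold quadCon
          rw [hX'def, sum_update' l i X (X i + t * s) α b, hα0]
          ring
        rw [e1]
        have hts : b i * (t * s) ≤ 0 := by nlinarith [mul_nonneg ht0 (neg_nonneg.mpr hbs)]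
        linarith
      have h0 := hS1 X' U W hcon2
      have e2 : quadObj δ e ζ η X' U W = quadObj δ e ζ η X U W
          + ((1/2) * δ i * (X i + t * s) ^ 2 + e i * (X i + t * s))
          - ((1/2) * δ i * (X i) ^ 2 + e i * (X i)) := by
        unfold quadObj
        rw [hX'def, sum_update' l i X (X i + t * s) δ e]
        ring
      rw [e2] at h0
      nlinarith [h0, htge]
    -- Step 2: per-coordinate reduction to a point on the parabola
    have hred : ∀ i, ∃ x' : ℝ,
        (1/2) * α i * x' ^ 2 + b i * x' = α i * y i + b i * x i ∧
        (1/2) * δ i * x' ^ 2 + e i * x' ≤ δ i * y i + e i * x i :=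
      fun i => coord_reduce (α i) (b i) (δ i) (e i) (x i) (y i) (hy i) (hsign i)
    choose x' hx'1 hx'2 using hred
    have hsum1 : ∑ i, ((1/2) * α i * (x' i) ^ 2 + b i * x' i)
        = ∑ i, (α i * y i + b i * x i) := Finset.sum_congr rfl (fun i _ => hx'1 i)
    have hsum2 : ∑ i, ((1/2) * δ i * (x' i) ^ 2 + e i * x' i)
        ≤ ∑ i, (δ i * y i + e i * x i) := Finset.sum_le_sum (fun i _ => hx'2 i)
    -- Step 3: realize z via u, w and take t → 0
    have key : ∀ t : ℝ, t ≠ 0 →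
        0 ≤ (socpObj δ e ζ c₀ x y z + v) + (k : ℝ) * ((1/2) * t ^ 2) := by
      intro t ht
      set W : Fin k → ℝ := fun j => if η j = 0 then t else -(η j) with hWdef
      have hWne : ∀ j, W j ≠ 0 := by
        intro j; simp only [hWdef]; split_ifs with h
        · exact ht
        · exact neg_ne_zero.mpr h
      set U : Fin k → ℝ := fun j => z j / W j with hUdef
      have hUW : ∀ j, U j * W j = z j := fun j => div_mul_cancel₀ _ (hWne j)
      have hzsum : ∑ j, U j * W j = ∑ j, z j := Finset.sum_congr rfl (fun j _ => hUW j)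
      have hconq : quadCon α b c x' U W ≤ 0 := by
        unfold quadCon
        rw [hzsum, hsum1]
        unfold socpConLhs at hzcon
        linarith
      have hq := hS1 x' U W hconq
      have hterm : ∀ j, ζ j * U j * W j + (1/2) * W j ^ 2 + η j * W j
          = ζ j * z j + (-(1/2)) * η j ^ 2 + (if η j = 0 then (1/2) * t ^ 2 else 0) := by
        intro j
        have h1 : ζ j * U j * W j = ζ j * z j := by rw [mul_assoc, hUW j]
        by_cases h : η j = 0
        · have hWt : W j = t := by simp only [hWdef]; rw [if_pos h]
          rw [if_pos h, h1, hWt, h]; ring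
        · have hWt : W j = -(η j) := by simp only [hWdef]; rw [if_neg h]
          rw [if_neg h, h1, hWt]; ring
      have hsumj : ∑ j, (ζ j * U j * W j + (1/2) * W j ^ 2 + η j * W j)
          = (∑ j, ζ j * z j) + c₀ + ∑ j, (if η j = 0 then (1/2) * t ^ 2 else (0:ℝ)) := by
        rw [Finset.sum_congr rfl (fun j _ => hterm j), Finset.sum_add_distrib,
          Finset.sum_add_distrib, hc₀, Finset.mul_sum]
      have hbound : ∑ j, (if η j = 0 then (1/2) * t ^ 2 else (0:ℝ))
          ≤ (k : ℝ) * ((1/2) * t ^ 2) := by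
        have h1 : ∑ j, (if η j = 0 then (1/2) * t ^ 2 else (0:ℝ))
            ≤ ∑ _j : Fin k, (1/2) * t ^ 2 :=
          Finset.sum_le_sum (fun j _ => by split_ifs with h; exacts [le_rfl, by positivity])
        have h2 : ∑ _j : Fin k, ((1/2) * t ^ 2 : ℝ) = (k : ℝ) * ((1/2) * t ^ 2) := by
          rw [Finset.sum_const, Finset.card_univ, Fintype.card_fin, nsmul_eq_mul]
        linarith
      unfold quadObj at hq
      rw [hsumj] at hq
      unfold socpObj
      linarith
    exact small_t _ _ (by positivity) key
  · -- easy direction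
    intro hS2 x u w hconq
    have hcone : socpConLhs α b x (fun i => (1/2) * x i ^ 2) (fun j => u j * w j) + c ≤ 0 := by
      show (∑ i, (α i * ((1/2) * x i ^ 2) + b i * x i)) + (∑ j, u j * w j) + c ≤ 0
      have e1 : ∑ i, (α i * ((1/2) * x i ^ 2) + b i * x i)
          = ∑ i, ((1/2) * α i * x i ^ 2 + b i * x i) :=
        Finset.sum_congr rfl (fun i _ => by ring)
      unfold quadCon at hconq
      linarith
    have h1 := hS2 x (fun i => (1/2) * x i ^ 2) (fun j => u j * w j) hcone (fun i => le_rfl)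
    have h1' : 0 ≤ (∑ i, (δ i * ((1/2) * x i ^ 2) + e i * x i))
        + (∑ j, ζ j * (u j * w j)) + c₀ + v := h1
    have e1 : ∑ i, (δ i * ((1/2) * x i ^ 2) + e i * x i)
        = ∑ i, ((1/2) * δ i * x i ^ 2 + e i * x i) :=
      Finset.sum_congr rfl (fun i _ => by ring)
    have e2 : ∑ j, (ζ j * (u j * w j) + (-(1/2)) * η j ^ 2)
        ≤ ∑ j, (ζ j * u j * w j + (1/2) * w j ^ 2 + η j * w j) :=
      Finset.sum_le_sum (fun j _ => by nlinarith [sq_nonneg (w j + η j)])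
    have e3 : ∑ j, (ζ j * (u j * w j) + (-(1/2)) * η j ^ 2)
        = (∑ j, ζ j * (u j * w j)) + (-(1/2)) * ∑ j, η j ^ 2 := by
      rw [Finset.sum_add_distrib, Finset.mul_sum]
    unfold quadObj
    rw [hc₀] at h1'
    linarith
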